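/- arXiv:0905.0796 — 2 statements merged into one kernel-verified Lean document; each statement's English description precedes it below -/
import Mathlib

section
/- The value function F(α,β) := Φ_{α,β}(x_{α,β}) is differentiable on the open quadrant α > 0, β > 0, and its partial derivatives satisfy ∂F/∂α = ‖x_{α,β}‖_{ℓ¹} and ∂F/∂β = (1/2)‖x_{α,β}‖_{ℓ²}². -/
noncomputable section

open Filter Topology

/-- `ℓ²(ℕ, ℝ)`. -/
abbrev ltwo : Type := lp (fun _ : ℕ => ℝ) 2

/-- `x ∈ ℓ¹`. -/
def inL1 (x : ltwo) : Prop := Memℓp (fun i => x i) 1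

/-- The `ℓ¹`-norm `‖x‖_{ℓ¹} = ∑ |xᵢ|` (junk value if `x ∉ ℓ¹`). -/
noncomputable def l1norm (x : ltwo) : ℝ := ∑' i, |x i|

/-- The elastic-net functional `Φ_{α,β}(x) = ½‖Kx − y‖² + α‖x‖₁ + (β/2)‖x‖₂²`,
real-valued on its effective domain `ℓ¹ ∩ ℓ²` (the convention `Φ = +∞` off `ℓ¹` is
implemented by restricting all statements to `inL1`). -/
noncomputable def Phi {H : Type*} [NormedAddCommGroup H] [InnerProductSpace ℝ H]
    (K : ltwo →L[ℝ] H) (y : H) (α β : ℝ) (x : ltwo) : ℝ :=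
  (1 / 2) * ‖K x - y‖ ^ 2 + α * l1norm x + (β / 2) * ‖x‖ ^ 2

/-- `x` is a minimizer of `Φ_{α,β}` over `ℓ²` (with the `+∞` convention off `ℓ¹`). -/
def IsMinimizer {H : Type*} [NormedAddCommGroup H] [InnerProductSpace ℝ H]
    (K : ltwo →L[ℝ] H) (y : H) (α β : ℝ) (x : ltwo) : Prop :=
  inL1 x ∧ ∀ z : ltwo, inL1 z → Phi K y α β x ≤ Phi K y α β z

/-!
Each `Φ_{α,β}(x)` is affine in `(α, β)` with derivative `(‖x‖₁, ½‖x‖₂²)`, so the value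
function `F = inf_x Φ_{·,·}(x)` is concave and `(α, β) ↦ (‖x_{α,β}‖₁, ½‖x_{α,β}‖₂²)` is a field
of supergradients of `F`. A function with a supergradient field is differentiable wherever that
field is continuous. Continuity comes from strong convexity: as `(α', β') → (α, β)` the
minimizers `x_{α',β'}` form a minimizing family for `Φ_{α,β}`, which is `β`-strongly convex, so
they converge to `x_{α,β}` in `ℓ²`; the `ℓ¹`-norms then converge because they are the only
remaining term of `Φ_{α,β}`.
-/

section Supergradient

variable {E : Type*} [NormedAddCommGroup E] [NormedSpace ℝ E] {F : E → ℝ}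
  {g : E → StrongDual ℝ E} {U : Set E} {x : E}

lemma abs_sub_sub_apply_le_of_supergradient
    (hsup : ∀ u ∈ U, ∀ v ∈ U, F v ≤ F u + g u (v - u)) (hx : x ∈ U) {v : E} (hv : v ∈ U) :
    |F v - F x - g x (v - x)| ≤ ‖g v - g x‖ * ‖v - x‖ := by
  have hlower : F x ≤ F v + g v (x - v) := hsup v hv x hx
  have hupper : F v ≤ F x + g x (v - x) := hsup x hx v hv
  have hdiff : |(g v - g x) (v - x)| ≤ ‖g v - g x‖ * ‖v - x‖ := by
    simpa only [Real.norm_eq_abs] using (g v - g x).le_opNorm (v - x)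
  rw [← neg_sub v x, map_neg] at hlower
  rw [sub_apply] at hdiff
  rw [abs_le] at hdiff ⊢
  constructor <;> linarith

lemma hasFDerivAt_of_supergradient (hU : U ∈ 𝓝 x)
    (hsup : ∀ u ∈ U, ∀ v ∈ U, F v ≤ F u + g u (v - u)) (hg : ContinuousAt g x) :
    HasFDerivAt F (g x) x := by
  rw [hasFDerivAt_iff_isLittleO, Asymptotics.isLittleO_iff]
  intro c hc
  have hgc : ∀ᶠ v in 𝓝 x, ‖g v - g x‖ ≤ c := by
    simpa only [dist_eq_norm] using hg.eventually (Metric.closedBall_mem_nhds _ hc)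
  filter_upwards [hU, hgc] with v hv hgv
  calc ‖F v - F x - g x (v - x)‖ ≤ ‖g v - g x‖ * ‖v - x‖ :=
        abs_sub_sub_apply_le_of_supergradient hsup (mem_of_mem_nhds hU) hv
    _ ≤ c * ‖v - x‖ := by gcongr

lemma tendsto_add_apply_sub_of_supergradient (hU : U ∈ 𝓝 x)
    (hsup : ∀ u ∈ U, ∀ v ∈ U, F v ≤ F u + g u (v - u)) {C : ℝ}
    (hC : ∀ᶠ v in 𝓝 x, ‖g v‖ ≤ C) :
    Tendsto (fun v => F v + g v (x - v)) (𝓝 x) (𝓝 (F x)) := by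
  rw [tendsto_iff_norm_sub_tendsto_zero]
  have hlim : Tendsto (fun v => 2 * (C + ‖g x‖) * ‖v - x‖) (𝓝 x) (𝓝 0) := by
    simpa using (tendsto_norm_sub_self x).const_mul (2 * (C + ‖g x‖))
  refine squeeze_zero' (Eventually.of_forall fun _ => norm_nonneg _) ?_ hlim
  filter_upwards [hU, hC] with v hv hgv
  have hrem := abs_sub_sub_apply_le_of_supergradient hsup (mem_of_mem_nhds hU) hv
  have hdiff : |(g v - g x) (v - x)| ≤ ‖g v - g x‖ * ‖v - x‖ := (g v - g x).le_opNorm (v - x)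
  have hgvx : ‖g v - g x‖ ≤ C + ‖g x‖ := (norm_sub_le _ _).trans (by gcongr)
  have hsplit : F v + g v (x - v) - F x = (F v - F x - g x (v - x)) - (g v - g x) (v - x) := by
    rw [← neg_sub v x, map_neg, sub_apply]; ring
  rw [Real.norm_eq_abs, hsplit]
  calc _ ≤ |F v - F x - g x (v - x)| + |(g v - g x) (v - x)| := abs_sub _ _
    _ ≤ 2 * (‖g v - g x‖ * ‖v - x‖) := by linarith
    _ ≤ 2 * (C + ‖g x‖) * ‖v - x‖ := by rw [← mul_assoc]; gcongr

end Supergradient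

lemma summable_abs_of_inL1 {x : ltwo} (hx : inL1 x) : Summable fun i => |x i| := by
  simpa using (memℓp_gen_iff (E := fun _ : ℕ => ℝ) (p := 1) one_pos).1 hx

lemma l1norm_nonneg (x : ltwo) : 0 ≤ l1norm x := tsum_nonneg fun _ => abs_nonneg _

lemma inL1_zero : inL1 0 := zero_memℓp

lemma l1norm_zero : l1norm 0 = 0 := by simp [l1norm]

lemma inL1_midpoint {x z : ltwo} (hx : inL1 x) (hz : inL1 z) : inL1 ((2⁻¹ : ℝ) • (x + z)) :=
  (hx.add hz).const_smul _

lemma l1norm_midpoint_le {x z : ltwo} (hx : inL1 x) (hz : inL1 z) :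
    l1norm ((2⁻¹ : ℝ) • (x + z)) ≤ 2⁻¹ * l1norm x + 2⁻¹ * l1norm z := by
  have hsx := (summable_abs_of_inL1 hx).mul_left 2⁻¹
  have hsz := (summable_abs_of_inL1 hz).mul_left 2⁻¹
  have hle : ∀ i, |((2⁻¹ : ℝ) • (x + z)) i| ≤ 2⁻¹ * |x i| + 2⁻¹ * |z i| := fun i => by
    rw [lp.coeFn_smul, lp.coeFn_add, Pi.smul_apply, Pi.add_apply, smul_eq_mul, abs_mul,
      abs_of_pos (by norm_num : (0 : ℝ) < 2⁻¹), ← mul_add]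
    gcongr
    exact abs_add_le _ _
  calc l1norm ((2⁻¹ : ℝ) • (x + z)) ≤ ∑' i, (2⁻¹ * |x i| + 2⁻¹ * |z i|) :=
        (summable_abs_of_inL1 (inL1_midpoint hx hz)).tsum_le_tsum hle (hsx.add hsz)
    _ = 2⁻¹ * l1norm x + 2⁻¹ * l1norm z := by
        rw [hsx.tsum_add hsz, tsum_mul_left, tsum_mul_left, l1norm, l1norm]

def paramDeriv (x : ltwo) : ℝ × ℝ →L[ℝ] ℝ :=
  l1norm x • ContinuousLinearMap.fst ℝ ℝ ℝ + ((1 / 2) * ‖x‖ ^ 2) • ContinuousLinearMap.snd ℝ ℝ ℝ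

@[simp]
lemma paramDeriv_apply (x : ltwo) (q : ℝ × ℝ) :
    paramDeriv x q = l1norm x * q.1 + (1 / 2) * ‖x‖ ^ 2 * q.2 := by
  simp [paramDeriv]

lemma norm_paramDeriv_le (x : ltwo) : ‖paramDeriv x‖ ≤ l1norm x + (1 / 2) * ‖x‖ ^ 2 := by
  refine (norm_add_le _ _).trans (add_le_add ?_ ?_) <;> rw [norm_smul, Real.norm_eq_abs]
  · rw [abs_of_nonneg (l1norm_nonneg x)]
    exact mul_le_of_le_one_right (l1norm_nonneg x) (ContinuousLinearMap.norm_fst_le ℝ ℝ ℝ)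
  · rw [abs_of_nonneg (by positivity)]
    exact mul_le_of_le_one_right (by positivity) (ContinuousLinearMap.norm_snd_le ℝ ℝ ℝ)

lemma tendsto_paramDeriv {ι : Type*} {l : Filter ι} {z : ι → ltwo} {x : ltwo}
    (h1 : Tendsto (fun i => l1norm (z i)) l (𝓝 (l1norm x))) (h2 : Tendsto z l (𝓝 x)) :
    Tendsto (fun i => paramDeriv (z i)) l (𝓝 (paramDeriv x)) :=
  (h1.smul_const _).add ((h2.norm.pow 2).const_mul _ |>.smul_const _)

lemma norm_midpoint_sq {E : Type*} [NormedAddCommGroup E] [InnerProductSpace ℝ E] (u v : E) :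
    ‖(2⁻¹ : ℝ) • (u + v)‖ ^ 2 = 2⁻¹ * ‖u‖ ^ 2 + 2⁻¹ * ‖v‖ ^ 2 - 4⁻¹ * ‖u - v‖ ^ 2 := by
  rw [norm_smul, mul_pow, Real.norm_of_nonneg (by norm_num)]
  linarith [parallelogram_law_with_norm ℝ u v]

section Phi

variable {H : Type*} [NormedAddCommGroup H] [InnerProductSpace ℝ H] (K : ltwo →L[ℝ] H) (y : H)

lemma Phi_eq_add_paramDeriv (x : ltwo) (p q : ℝ × ℝ) :
    Phi K y q.1 q.2 x = Phi K y p.1 p.2 x + paramDeriv x (q - p) := by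
  simp only [Phi, paramDeriv_apply, Prod.fst_sub, Prod.snd_sub]
  ring

lemma Phi_zero (a b : ℝ) : Phi K y a b 0 = ‖y‖ ^ 2 / 2 := by
  simp only [Phi, map_zero, zero_sub, norm_neg, l1norm_zero, norm_zero, mul_zero, add_zero,
    ne_eq, OfNat.ofNat_ne_zero, not_false_eq_true, zero_pow]
  ring

end Phi

section Minimizer

variable {H : Type*} [NormedAddCommGroup H] [InnerProductSpace ℝ H] {K : ltwo →L[ℝ] H} {y : H}
  {a b : ℝ} {x : ltwo}

lemma IsMinimizer.Phi_add_sq_le (hm : IsMinimizer K y a b x) (ha : 0 ≤ a) {z : ltwo}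
    (hz : inL1 z) : Phi K y a b x + b / 4 * ‖z - x‖ ^ 2 ≤ Phi K y a b z := by
  set m : ltwo := (2⁻¹ : ℝ) • (x + z)
  have hmin : Phi K y a b x ≤ Phi K y a b m := hm.2 m (inL1_midpoint hm.1 hz)
  have hl1 : a * l1norm m ≤ a * (2⁻¹ * l1norm x + 2⁻¹ * l1norm z) :=
    mul_le_mul_of_nonneg_left (l1norm_midpoint_le hm.1 hz) ha
  have hKm : K m - y = (2⁻¹ : ℝ) • ((K x - y) + (K z - y)) := by
    simp only [m, map_smul, map_add]; module
  have hdata : ‖K m - y‖ ^ 2 ≤ 2⁻¹ * ‖K x - y‖ ^ 2 + 2⁻¹ * ‖K z - y‖ ^ 2 := by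
    rw [hKm, norm_midpoint_sq]
    linarith [sq_nonneg ‖K x - y - (K z - y)‖]
  have hreg : ‖m‖ ^ 2 = 2⁻¹ * ‖x‖ ^ 2 + 2⁻¹ * ‖z‖ ^ 2 - 4⁻¹ * ‖z - x‖ ^ 2 := by
    rw [norm_midpoint_sq, norm_sub_rev]
  simp only [Phi] at hmin ⊢
  rw [hreg] at hmin
  linarith

lemma IsMinimizer.norm_paramDeriv_le (hm : IsMinimizer K y a b x) (ha : 0 < a) (hb : 0 < b) :
    ‖paramDeriv x‖ ≤ ‖y‖ ^ 2 / (2 * a) + ‖y‖ ^ 2 / (2 * b) := by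
  have h0 : Phi K y a b x ≤ ‖y‖ ^ 2 / 2 := Phi_zero K y a b ▸ hm.2 0 inL1_zero
  have hG : 0 ≤ (1 / 2) * ‖K x - y‖ ^ 2 := by positivity
  have h1 : 0 ≤ a * l1norm x := mul_nonneg ha.le (l1norm_nonneg x)
  have h2 : 0 ≤ b / 2 * ‖x‖ ^ 2 := by positivity
  have hl1 : l1norm x ≤ ‖y‖ ^ 2 / (2 * a) := by
    rw [le_div_iff₀ (by positivity)]; unfold Phi at h0; linarith
  have hl2 : (1 / 2) * ‖x‖ ^ 2 ≤ ‖y‖ ^ 2 / (2 * b) := by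
    rw [le_div_iff₀ (by positivity)]; unfold Phi at h0; linarith
  exact (_root_.norm_paramDeriv_le x).trans (add_le_add hl1 hl2)

lemma IsMinimizer.tendsto_of_tendsto_Phi (hm : IsMinimizer K y a b x) (ha : 0 ≤ a) (hb : 0 < b)
    {ι : Type*} {l : Filter ι} {z : ι → ltwo} (hz : ∀ᶠ i in l, inL1 (z i))
    (hΦ : Tendsto (fun i => Phi K y a b (z i)) l (𝓝 (Phi K y a b x))) :
    Tendsto z l (𝓝 x) := by
  have hbound : ∀ᶠ i in l, ‖z i - x‖ ^ 2 ≤ 4 / b * (Phi K y a b (z i) - Phi K y a b x) := by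
    filter_upwards [hz] with i hzi
    rw [div_mul_eq_mul_div, le_div_iff₀ hb]
    linarith [hm.Phi_add_sq_le ha hzi]
  have hlim : Tendsto (fun i => 4 / b * (Phi K y a b (z i) - Phi K y a b x)) l (𝓝 0) := by
    simpa using (hΦ.sub_const (Phi K y a b x)).const_mul (4 / b)
  have hsq := squeeze_zero' (Eventually.of_forall fun i => sq_nonneg ‖z i - x‖) hbound hlim
  rw [tendsto_iff_norm_sub_tendsto_zero]
  simpa [Real.sqrt_sq (norm_nonneg _)] using hsq.sqrt

lemma IsMinimizer.tendsto_l1norm_of_tendsto_Phi (hm : IsMinimizer K y a b x) (ha : 0 < a)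
    (hb : 0 < b) {ι : Type*} {l : Filter ι} {z : ι → ltwo} (hz : ∀ᶠ i in l, inL1 (z i))
    (hΦ : Tendsto (fun i => Phi K y a b (z i)) l (𝓝 (Phi K y a b x))) :
    Tendsto (fun i => l1norm (z i)) l (𝓝 (l1norm x)) := by
  have hzx := hm.tendsto_of_tendsto_Phi ha.le hb hz hΦ
  have hdata := (((K.continuous.tendsto x).comp hzx).sub_const y).norm.pow 2 |>.const_mul (1 / 2)
  have hreg := (hzx.norm.pow 2).const_mul (b / 2)
  convert ((hΦ.sub hdata).sub hreg).div_const a using 2 <;>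
    simp only [Phi, Function.comp_apply] <;> field_simp <;> ring

end Minimizer

section Partial

variable {𝕜 : Type*} [NontriviallyNormedField 𝕜] {f : 𝕜 × 𝕜 → 𝕜} {c d a b : 𝕜}

lemma HasFDerivAt.hasDerivAt_left
    (h : HasFDerivAt f (c • ContinuousLinearMap.fst 𝕜 𝕜 𝕜 + d • ContinuousLinearMap.snd 𝕜 𝕜 𝕜)
      (a, b)) :
    HasDerivAt (fun t => f (t, b)) c a := by
  simpa [Function.comp_def] using
    h.comp_hasDerivAt a ((hasDerivAt_id a).prodMk (hasDerivAt_const a b))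

lemma HasFDerivAt.hasDerivAt_right
    (h : HasFDerivAt f (c • ContinuousLinearMap.fst 𝕜 𝕜 𝕜 + d • ContinuousLinearMap.snd 𝕜 𝕜 𝕜)
      (a, b)) :
    HasDerivAt (fun t => f (a, t)) d b := by
  simpa [Function.comp_def] using
    h.comp_hasDerivAt b ((hasDerivAt_const b a).prodMk (hasDerivAt_id b))

end Partial

/-- Differentiability of the value function `F(α,β) = Φ_{α,β}(x_{α,β})` on the open
quadrant, with `∂F/∂α = ‖x_{α,β}‖₁` and `∂F/∂β = ½‖x_{α,β}‖₂²`; the total (Fréchet)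
derivative is the linear map `(a,b) ↦ ‖x_{α,β}‖₁ · a + ½‖x_{α,β}‖₂² · b`. -/
theorem elasticNet_value_function_differentiable
    {H : Type*} [NormedAddCommGroup H] [InnerProductSpace ℝ H]
    (K : ltwo →L[ℝ] H) (y : H)
    (xmin : ℝ → ℝ → ltwo)
    (hxmin : ∀ α β : ℝ, 0 < α → 0 < β → IsMinimizer K y α β (xmin α β))
    (α β : ℝ) (hα : 0 < α) (hβ : 0 < β) :
    HasFDerivAt (fun p : ℝ × ℝ => Phi K y p.1 p.2 (xmin p.1 p.2))
        (l1norm (xmin α β) • ContinuousLinearMap.fst ℝ ℝ ℝ +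
          ((1 / 2) * ‖xmin α β‖ ^ 2) • ContinuousLinearMap.snd ℝ ℝ ℝ)
        (α, β) ∧
      HasDerivAt (fun a : ℝ => Phi K y a β (xmin a β)) (l1norm (xmin α β)) α ∧
      HasDerivAt (fun b : ℝ => Phi K y α b (xmin α b)) ((1 / 2) * ‖xmin α β‖ ^ 2) β := by
  set U : Set (ℝ × ℝ) := {q | 0 < q.1 ∧ 0 < q.2}
  have hU : U ∈ 𝓝 (α, β) :=
    ((isOpen_lt continuous_const continuous_fst).inter
      (isOpen_lt continuous_const continuous_snd)).mem_nhds ⟨hα, hβ⟩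
  have hsup : ∀ u ∈ U, ∀ v ∈ U, Phi K y v.1 v.2 (xmin v.1 v.2) ≤
      Phi K y u.1 u.2 (xmin u.1 u.2) + paramDeriv (xmin u.1 u.2) (v - u) := fun u hu v hv =>
    ((hxmin v.1 v.2 hv.1 hv.2).2 _ (hxmin u.1 u.2 hu.1 hu.2).1).trans_eq
      (Phi_eq_add_paramDeriv K y _ u v)
  set bound : ℝ × ℝ → ℝ := fun q => ‖y‖ ^ 2 / (2 * q.1) + ‖y‖ ^ 2 / (2 * q.2)
  have hbound : ∀ᶠ q in 𝓝 (α, β), ‖paramDeriv (xmin q.1 q.2)‖ ≤ bound (α, β) + 1 := by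
    have hcont : ContinuousAt bound (α, β) := by
      fun_prop (disch := simp [hα.ne', hβ.ne'])
    filter_upwards [hU, hcont.eventually (gt_mem_nhds (lt_add_one (bound (α, β))))]
      with q hq hlt
    exact ((hxmin q.1 q.2 hq.1 hq.2).norm_paramDeriv_le hq.1 hq.2).trans hlt.le
  have hΦ : Tendsto (fun q : ℝ × ℝ => Phi K y α β (xmin q.1 q.2)) (𝓝 (α, β))
      (𝓝 (Phi K y α β (xmin α β))) :=
    (tendsto_add_apply_sub_of_supergradient hU hsup hbound).congr fun q =>
      (Phi_eq_add_paramDeriv K y _ q (α, β)).symm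
  have hinL1 : ∀ᶠ q in 𝓝 (α, β), inL1 (xmin q.1 q.2) :=
    Filter.mem_of_superset hU fun q hq => (hxmin q.1 q.2 hq.1 hq.2).1
  have hm := hxmin α β hα hβ
  have hcont : ContinuousAt (fun q : ℝ × ℝ => paramDeriv (xmin q.1 q.2)) (α, β) :=
    tendsto_paramDeriv (hm.tendsto_l1norm_of_tendsto_Phi hα hβ hinL1 hΦ)
      (hm.tendsto_of_tendsto_Phi hα.le hβ hinL1 hΦ)
  have hF := hasFDerivAt_of_supergradient hU hsup hcont
  exact ⟨hF, hF.hasDerivAt_left, hF.hasDerivAt_right⟩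
end
end

section
/- Let x_η denote the R_η-minimizing solution of Kx = y†, and let ‖x_0‖_{ℓ²} = lim_{η→0} ‖x_η‖_{ℓ²} and ‖x_∞‖_{ℓ²} = lim_{η→∞} ‖x_η‖_{ℓ²} (these limits exist since η ↦ ‖x_η‖_{ℓ²} is monotone and bounded). If ‖x_∞‖_{ℓ²} > ‖x_0‖_{ℓ²}, then there exists a set C ⊂ (0, ∞) of positive Lebesgue measure such that for each η ∈ C the function η ↦ ‖x_η‖_{ℓ²} is differentiable at η with strictly positive derivative. -/
/-!
Comparing `R_{η₁}` and `R_{η₂}` at the midpoint of `x_{η₁}` and `x_{η₂}` (again a solution), the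
parallelogram law gives `‖x_{η₁} - x_{η₂}‖² ≤ 2 (η₂ - η₁) (‖x_{η₁}‖₁ - ‖x_{η₂}‖₁)`, and the
minimality of `x_{η₁}` against `x_{η₂}` bounds `η₁ (‖x_{η₁}‖₁ - ‖x_{η₂}‖₁)` by
`‖x_{η₁} - x_{η₂}‖ · sup ‖x_η‖`. Together these make `η ↦ x_η` Lipschitz on every `[a, b]` with
`a > 0`. Picking `a` close to `0` and `b` large with `‖x_a‖ < ‖x_b‖`, the function `η ↦ ‖x_η‖`
is absolutely continuous on `[a, b]`, so `‖x_b‖ - ‖x_a‖` is the integral of its derivative,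
which therefore is positive on a set of positive measure.
-/

noncomputable section

open Filter Topology

/-- The functional `R_η(x) = η‖x‖₁ + ½‖x‖₂²` (finite on `ℓ¹ ∩ ℓ²`). -/
noncomputable def Rfun (η : ℝ) (x : ltwo) : ℝ := η * l1norm x + (1 / 2) * ‖x‖ ^ 2

/-- `x†` is the `R_η`-minimizing solution of `Kx = y†`: it solves the equation and
minimizes `R_η` among all solutions in `ℓ¹ ∩ ℓ²`. -/
def IsRMinSolution {H : Type*} [NormedAddCommGroup H] [InnerProductSpace ℝ H]
    (K : ltwo →L[ℝ] H) (ydag : H) (η : ℝ) (xdag : ltwo) : Prop :=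
  inL1 xdag ∧ K xdag = ydag ∧
    ∀ z : ltwo, inL1 z → K z = ydag → Rfun η xdag ≤ Rfun η z

open MeasureTheory Set

theorem AbsolutelyContinuousOnInterval.volume_setOf_hasDerivAt_pos_pos {f : ℝ → ℝ} {a b : ℝ}
    (hf : AbsolutelyContinuousOnInterval f a b) (hab : a ≤ b) (hfab : f a < f b) :
    0 < volume {x ∈ Ioo a b | ∃ d, 0 < d ∧ HasDerivAt f d x} := by
  refine pos_iff_ne_zero.2 fun hC => ?_
  have hderiv_nonpos : ∀ᵐ x ∂volume.restrict (Ioo a b), deriv f x ≤ 0 := by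
    rw [ae_restrict_iff' measurableSet_Ioo]
    filter_upwards [hf.ae_differentiableAt, measure_eq_zero_iff_ae_notMem.1 hC]
      with x hdiff hxC hx
    by_contra! hpos
    exact hxC ⟨hx, deriv f x, hpos,
      (hdiff (Icc_subset_uIcc (Ioo_subset_Icc_self hx))).hasDerivAt⟩
  rw [Measure.restrict_congr_set Ioo_ae_eq_Icc] at hderiv_nonpos
  have := intervalIntegral.integral_nonneg_of_ae_restrict hab
    (hderiv_nonpos.mono fun x hx => neg_nonneg.2 hx)
  rw [intervalIntegral.integral_neg, hf.integral_deriv_eq_sub] at this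
  linarith

namespace inL1

variable {x y : ltwo}

theorem summable_abs (hx : inL1 x) : Summable fun i => |x i| := by
  simpa [Real.norm_eq_abs] using hx.summable (p := 1) (by norm_num)

theorem add (hx : inL1 x) (hy : inL1 y) : inL1 (x + y) := by
  exact Memℓp.add hx hy

theorem const_smul (c : ℝ) (hx : inL1 x) : inL1 (c • x) := by
  exact Memℓp.const_smul hx c

end inL1

theorem l1norm_add_le {x y : ltwo} (hx : inL1 x) (hy : inL1 y) :
    l1norm (x + y) ≤ l1norm x + l1norm y := by
  rw [l1norm, l1norm, l1norm, ← hx.summable_abs.tsum_add hy.summable_abs]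
  exact (hx.add hy).summable_abs.tsum_le_tsum (fun i => abs_add_le (x i) (y i))
    (hx.summable_abs.add hy.summable_abs)

theorem l1norm_smul (c : ℝ) (x : ltwo) : l1norm (c • x) = |c| * l1norm x := by
  simp only [l1norm, lp.coeFn_smul, Pi.smul_apply, smul_eq_mul, abs_mul, tsum_mul_left]

namespace IsRMinSolution

variable {H : Type*} [NormedAddCommGroup H] [InnerProductSpace ℝ H] {K : ltwo →L[ℝ] H} {y : H}
  {η₁ η₂ : ℝ} {x₁ x₂ : ltwo}

theorem Rfun_le (h₁ : IsRMinSolution K y η₁ x₁) (h₂ : IsRMinSolution K y η₂ x₂) :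
    Rfun η₁ x₁ ≤ Rfun η₁ x₂ :=
  h₁.2.2 x₂ h₂.1 h₂.2.1

theorem l1norm_le_of_lt (h₁ : IsRMinSolution K y η₁ x₁) (h₂ : IsRMinSolution K y η₂ x₂)
    (hη : η₁ < η₂) : l1norm x₂ ≤ l1norm x₁ := by
  have h₁₂ := h₁.Rfun_le h₂
  have h₂₁ := h₂.Rfun_le h₁
  simp only [Rfun] at h₁₂ h₂₁
  nlinarith

theorem norm_le_of_lt (h₁ : IsRMinSolution K y η₁ x₁) (h₂ : IsRMinSolution K y η₂ x₂)
    (hη₁ : 0 ≤ η₁) (hη : η₁ < η₂) : ‖x₁‖ ≤ ‖x₂‖ := by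
  have h₁₂ := h₁.Rfun_le h₂
  simp only [Rfun] at h₁₂
  nlinarith [mul_le_mul_of_nonneg_left (h₁.l1norm_le_of_lt h₂ hη) hη₁, norm_nonneg x₁,
    norm_nonneg x₂]

theorem norm_sub_sq_le (h₁ : IsRMinSolution K y η₁ x₁) (h₂ : IsRMinSolution K y η₂ x₂)
    (hη₁ : 0 ≤ η₁) (hη₂ : 0 ≤ η₂) :
    ‖x₁ - x₂‖ ^ 2 ≤ 2 * (η₂ - η₁) * (l1norm x₁ - l1norm x₂) := by
  set z : ltwo := (2⁻¹ : ℝ) • (x₁ + x₂)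
  have hzL1 : inL1 z := (h₁.1.add h₂.1).const_smul _
  have hKz : K z = y := by
    simp only [z, map_smul, map_add, h₁.2.1, h₂.2.1, ← two_smul ℝ y, smul_smul]
    norm_num
  have hl1z : l1norm z ≤ (l1norm x₁ + l1norm x₂) / 2 := by
    have := l1norm_add_le h₁.1 h₂.1
    rw [l1norm_smul, abs_of_pos (by norm_num : (0 : ℝ) < 2⁻¹)]
    linarith
  have hnormz : ‖z‖ ^ 2 = (‖x₁ + x₂‖ ^ 2) / 4 := by
    rw [norm_smul, mul_pow, Real.norm_eq_abs, abs_of_pos (by norm_num : (0 : ℝ) < 2⁻¹)]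
    ring
  have hpar := parallelogram_law_with_norm ℝ x₁ x₂
  have hm₁ := h₁.2.2 z hzL1 hKz
  have hm₂ := h₂.2.2 z hzL1 hKz
  simp only [Rfun] at hm₁ hm₂
  nlinarith [mul_le_mul_of_nonneg_left hl1z (add_nonneg hη₁ hη₂)]

theorem mul_norm_sub_le {M : ℝ} (h₁ : IsRMinSolution K y η₁ x₁) (h₂ : IsRMinSolution K y η₂ x₂)
    (hη₁ : 0 < η₁) (hη : η₁ ≤ η₂) (hM₁ : ‖x₁‖ ≤ M) (hM₂ : ‖x₂‖ ≤ M) :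
    η₁ * ‖x₁ - x₂‖ ≤ 2 * M * (η₂ - η₁) := by
  have hsq := h₁.norm_sub_sq_le h₂ hη₁.le (hη₁.le.trans hη)
  have h₁₂ := h₁.Rfun_le h₂
  simp only [Rfun] at h₁₂
  have hw : ‖x₂‖ - ‖x₁‖ ≤ ‖x₁ - x₂‖ := by
    rw [norm_sub_rev]
    exact norm_sub_norm_le x₂ x₁
  have hl1 : η₁ * (l1norm x₁ - l1norm x₂) ≤ ‖x₁ - x₂‖ * M := by
    nlinarith [norm_nonneg x₁, norm_nonneg x₂, norm_nonneg (x₁ - x₂)]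
  rcases (norm_nonneg (x₁ - x₂)).eq_or_lt with hw0 | hwpos
  · rw [← hw0]
    nlinarith [norm_nonneg x₁]
  · nlinarith [mul_le_mul_of_nonneg_left hl1 (by linarith : (0 : ℝ) ≤ 2 * (η₂ - η₁))]

end IsRMinSolution

section Family

variable {H : Type*} [NormedAddCommGroup H] [InnerProductSpace ℝ H] {K : ltwo →L[ℝ] H} {y : H}
  {xsol : ℝ → ltwo}

theorem monotoneOn_norm_of_isRMinSolution
    (hxsol : ∀ η : ℝ, 0 ≤ η → IsRMinSolution K y η (xsol η)) :
    MonotoneOn (fun η => ‖xsol η‖) (Ici 0) := by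
  intro s hs t ht hst
  rcases hst.eq_or_lt with rfl | hlt
  · exact le_rfl
  · exact (hxsol s hs).norm_le_of_lt (hxsol t ht) hs hlt

theorem lipschitzOnWith_of_isRMinSolution
    (hxsol : ∀ η : ℝ, 0 ≤ η → IsRMinSolution K y η (xsol η)) {a M : ℝ} {s : Set ℝ}
    (ha : 0 < a) (hs : s ⊆ Ici a) (hM : ∀ η ∈ s, ‖xsol η‖ ≤ M) :
    LipschitzOnWith (2 * M / a).toNNReal xsol s := by
  refine LipschitzOnWith.of_dist_le_mul fun η₁ h₁ η₂ h₂ => ?_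
  wlog hη : η₁ ≤ η₂ generalizing η₁ η₂
  · rw [dist_comm, dist_comm η₁]
    exact this η₂ h₂ η₁ h₁ (le_of_not_ge hη)
  have hη₁ : a ≤ η₁ := hs h₁
  have hmul := (hxsol η₁ (ha.le.trans hη₁)).mul_norm_sub_le
    (hxsol η₂ (ha.le.trans (hη₁.trans hη))) (ha.trans_le hη₁) hη (hM η₁ h₁) (hM η₂ h₂)
  have hM0 : 0 ≤ M := (norm_nonneg _).trans (hM η₁ h₁)
  rw [dist_eq_norm, Real.dist_eq, abs_of_nonpos (sub_nonpos.2 hη), neg_sub,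
    Real.coe_toNNReal _ (by positivity), div_mul_eq_mul_div, le_div_iff₀ ha, mul_comm]
  nlinarith [mul_le_mul_of_nonneg_right hη₁ (norm_nonneg (xsol η₁ - xsol η₂))]

end Family

/-- If `lim_{η→∞}‖x_η‖₂ > lim_{η→0}‖x_η‖₂` then there is a set `C ⊆ (0,∞)` of positive
Lebesgue measure on which `η ↦ ‖x_η‖₂` is differentiable with strictly positive
derivative (i.e. strictly increasing there). -/
theorem RMinSolution_norm_strictly_increasing_on_positive_measure_set
    {H : Type*} [NormedAddCommGroup H] [InnerProductSpace ℝ H]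
    (K : ltwo →L[ℝ] H) (ydag : H)
    (xsol : ℝ → ltwo) (hxsol : ∀ η : ℝ, 0 ≤ η → IsRMinSolution K ydag η (xsol η))
    (L0 Linf : ℝ)
    (hL0 : Tendsto (fun η => ‖xsol η‖) (nhdsWithin 0 (Set.Ioi 0)) (nhds L0))
    (hLinf : Tendsto (fun η => ‖xsol η‖) atTop (nhds Linf))
    (hlt : L0 < Linf) :
    ∃ C : Set ℝ, C ⊆ Set.Ioi 0 ∧ 0 < MeasureTheory.volume C ∧
      ∀ η ∈ C, ∃ d : ℝ, 0 < d ∧ HasDerivAt (fun t : ℝ => ‖xsol t‖) d η := by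
  obtain ⟨m, hL0m, hmLinf⟩ := exists_between hlt
  obtain ⟨a, ham, ha⟩ := ((hL0.eventually_lt_const hL0m).and self_mem_nhdsWithin).exists
  obtain ⟨b, hmb, hab⟩ :=
    ((hLinf.eventually_const_lt hmLinf).and (eventually_gt_atTop a)).exists
  have hbound : ∀ η ∈ Icc a b, ‖xsol η‖ ≤ ‖xsol b‖ := fun η hη =>
    monotoneOn_norm_of_isRMinSolution hxsol (ha.le.trans hη.1 : (0 : ℝ) ≤ η)
      (ha.le.trans hab.le : (0 : ℝ) ≤ b) hη.2
  have hlip := lipschitzWith_one_norm.comp_lipschitzOnWith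
    (lipschitzOnWith_of_isRMinSolution hxsol ha Icc_subset_Ici_self hbound)
  rw [← uIcc_of_le hab.le] at hlip
  exact ⟨_, fun η hη => ha.trans hη.1.1,
    hlip.absolutelyContinuousOnInterval.volume_setOf_hasDerivAt_pos_pos hab.le (ham.trans hmb),
    fun η hη => hη.2⟩
end
end
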